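/- Let Φ = (G, φ) be a T-gain graph on a connected graph G. Then E(Φ) ≥ 2ρ(Φ), where ρ(Φ) is the spectral radius of A(Φ). If G is bipartite, equality holds if and only if Φ ∼ (K_{p,q}, 1) for some p, q. -/

import Mathlib

open Matrix BigOperators
open scoped Classical ComplexOrder

/-- A complex unit gain graph (`𝕋`-gain graph) on a finite vertex type `V`. -/
structure TGainGraph (V : Type*) [Fintype V] [DecidableEq V] where
  G : SimpleGraph V
  A : Matrix V V ℂ
  herm : A.IsHermitian
  unitGain : ∀ i j, G.Adj i j → ‖A i j‖ = 1
  zeroGain : ∀ i j, ¬ G.Adj i j → A i j = 0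

namespace TGainGraph

variable {V : Type*} [Fintype V] [DecidableEq V]

/-- The energy of a `𝕋`-gain graph: sum of absolute values of eigenvalues of `A(Φ)`. -/
noncomputable def energy (Φ : TGainGraph V) : ℝ :=
  ∑ i, |Φ.herm.eigenvalues i|

/-- `|A(Φ)| = (A(Φ) A(Φ)ᴴ)^{1/2}`. -/
noncomputable def absMatrix (Φ : TGainGraph V) : Matrix V V ℂ :=
  ((Matrix.posSemidef_self_mul_conjTranspose Φ.A).1.eigenvectorUnitary : Matrix V V ℂ) *
    Matrix.diagonal (((↑) : ℝ → ℂ) ∘ Real.sqrt ∘ (Matrix.posSemidef_self_mul_conjTranspose Φ.A).1.eigenvalues) *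
    (star ((Matrix.posSemidef_self_mul_conjTranspose Φ.A).1.eigenvectorUnitary : Matrix V V ℂ))

/-- Energy of a vertex: the `(i,i)` entry of `|A(Φ)|`. -/
noncomputable def vertexEnergy (Φ : TGainGraph V) (i : V) : ℝ :=
  (Φ.absMatrix i i).re

/-- Degree of a vertex in the underlying graph. -/
noncomputable def deg (Φ : TGainGraph V) (i : V) : ℕ := Φ.G.degree i

/-- Maximum vertex degree of the underlying graph. -/
noncomputable def maxDeg (Φ : TGainGraph V) : ℕ := Φ.G.maxDegree

/-- Spectral radius of `A(Φ)`. -/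
noncomputable def specRadius (Φ : TGainGraph V) : ℝ :=
  ⨆ i, |Φ.herm.eigenvalues i|

/-- Switching equivalence of two gain graphs on the same vertex set: same
underlying graph, and adjacency matrices conjugate by a diagonal unitary. -/
def SwitchEquiv (Φ₁ Φ₂ : TGainGraph V) : Prop :=
  Φ₁.G = Φ₂.G ∧ ∃ U : Matrix V V ℂ, U.IsDiag ∧ U ∈ Matrix.unitaryGroup V ℂ ∧
    Φ₁.A = U * Φ₂.A * Uᴴ

/-- `Φ` switches to the all-ones gain on its underlying graph,
i.e. `Φ ∼ (G, 1)` (equivalently, `Φ` is balanced). -/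
def SwitchesToOne (Φ : TGainGraph V) : Prop :=
  ∃ U : Matrix V V ℂ, U.IsDiag ∧ U ∈ Matrix.unitaryGroup V ℂ ∧
    Φ.A = U * (Φ.G.adjMatrix ℂ) * Uᴴ

/-- `Φ ∼ (K_{a,b}, 1)`: the underlying graph is (isomorphic to) the complete
bipartite graph `K_{a,b}` via some bijection `e`, and the gains switch to `1`. -/
def SwitchEquivToCompleteBipartite (Φ : TGainGraph V) (a b : ℕ) : Prop :=
  (∃ e : V ≃ (Fin a ⊕ Fin b), ∀ i j, Φ.G.Adj i j ↔
      (completeBipartiteGraph (Fin a) (Fin b)).Adj (e i) (e j)) ∧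
  SwitchesToOne Φ

/-- The gain of a walk: the product of the gains of its edges in order. -/
noncomputable def walkGain (Φ : TGainGraph V) {u v : V} (w : Φ.G.Walk u v) : ℂ :=
  (w.darts.map (fun d => Φ.A d.fst d.snd)).prod

/-- A gain graph is balanced if every cycle has gain `1`. -/
def Balanced (Φ : TGainGraph V) : Prop :=
  ∀ (u : V) (w : Φ.G.Walk u u), w.IsCycle → Φ.walkGain w = 1

/-- The restriction of a gain graph to a set of vertices. -/
noncomputable def restrict (Φ : TGainGraph V) (s : Set V) : TGainGraph s where
  G := Φ.G.induce s
  A := Φ.A.submatrix (Subtype.val) (Subtype.val)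
  herm := Φ.herm.submatrix _
  unitGain := fun i j h => Φ.unitGain i j h
  zeroGain := fun i j h => Φ.zeroGain i j h

/-- The vertex set of the connected component `c`. -/
def componentSet (Φ : TGainGraph V) (c : Φ.G.ConnectedComponent) : Set V :=
  {v | Φ.G.connectedComponentMk v = c}

/-- Every connected component of `Φ` is either an isolated vertex or a balanced
complete bipartite gain graph `(K_{k,k},1)` with a perfect matching. -/
def ComponentsBalancedCompleteBipartitePM (Φ : TGainGraph V) : Prop :=
  ∀ c : Φ.G.ConnectedComponent,
    (∀ v ∈ Φ.componentSet c, ∀ w, ¬ Φ.G.Adj v w) ∨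
    ∃ k : ℕ, 0 < k ∧
      (Φ.restrict (Φ.componentSet c)).SwitchEquivToCompleteBipartite k k

/-- The matching number of a graph. -/
noncomputable def matchingNumber (G : SimpleGraph V) : ℕ :=
  sSup {k | ∃ M : G.Subgraph, M.IsMatching ∧ M.edgeSet.ncard = k}

/-- The vertex cover number of a graph. -/
noncomputable def coverNumber (G : SimpleGraph V) : ℕ :=
  sInf {k | ∃ s : Finset V, s.card = k ∧ ∀ i j, G.Adj i j → i ∈ s ∨ j ∈ s}

/-- The number of odd cycles of a graph (counted by their edge sets). -/
noncomputable def oddCycleCount (G : SimpleGraph V) : ℕ :=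
  Set.ncard {s : Set (Sym2 V) | ∃ (u : V) (w : G.Walk u u),
    w.IsCycle ∧ Odd w.length ∧ s = {e | e ∈ w.edges}}

end TGainGraph

/-!
The eigenvalues of `A(Φ)` sum to zero, so the one of largest modulus is balanced by the others,
which gives `E ≥ 2ρ`. If `G` is bipartite, conjugating by the `±1` signature of a 2-colouring
sends `A` to `-A`, so the spectrum is symmetric: `ρ` and `-ρ` are both eigenvalues, and
`E = 2ρ` forces all other eigenvalues to vanish, i.e. `rank A ≤ 2`; conversely `E ≤ rank A · ρ`.
In a connected bipartite gain graph of rank at most two, the columns of the two ends `a, b` of an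
edge span all columns, and a column of `a`'s colour class is a nonzero multiple of column `a`.
Hence every vertex of one class is adjacent to every vertex of the other, and the gains factor as
`g u * conj (g v)`, i.e. `Φ ∼ (K_{p,q}, 1)`.
-/

open Finset in
lemma two_mul_abs_le_sum_abs_of_sum_eq_zero {ι : Type*} [Fintype ι] (f : ι → ℝ)
    (hf : ∑ i, f i = 0) (j : ι) : 2 * |f j| ≤ ∑ i, |f i| := by
  have hrest : ∑ i ∈ univ.erase j, f i = -f j := by
    linarith [add_sum_erase univ f (mem_univ j)]
  calc 2 * |f j| = |f j| + |∑ i ∈ univ.erase j, f i| := by rw [hrest, abs_neg]; ring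
    _ ≤ |f j| + ∑ i ∈ univ.erase j, |f i| := by gcongr; exact abs_sum_le_sum_abs _ _
    _ = ∑ i, |f i| := add_sum_erase univ (fun i => |f i|) (mem_univ j)

open Finset in
lemma card_ne_zero_le_two_of_sum_abs_le {ι : Type*} [Fintype ι] (f : ι → ℝ) {i j : ι}
    (hij : i ≠ j) (h : ∑ k, |f k| ≤ |f i| + |f j|) : Fintype.card {k // f k ≠ 0} ≤ 2 := by
  have hzero : ∀ k, k ≠ i → k ≠ j → f k = 0 := by
    intro k hki hkj
    have hsub : ∑ l ∈ {k, i, j}, |f l| ≤ ∑ l, |f l| :=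
      sum_le_sum_of_subset_of_nonneg (subset_univ _) fun l _ _ => abs_nonneg (f l)
    rw [sum_insert (by simp [hki, hkj]), sum_pair hij] at hsub
    exact abs_eq_zero.mp (le_antisymm (by linarith) (abs_nonneg _))
  rw [Fintype.card_subtype]
  calc #{k | f k ≠ 0} ≤ #{i, j} := card_le_card fun k hk => by
        by_contra hkij
        simp only [mem_insert, mem_singleton, not_or] at hkij
        exact (mem_filter.mp hk).2 (hzero k hkij.1 hkij.2)
    _ = 2 := card_pair hij

lemma Matrix.col_mem_span_of_rank_le {K m n ι : Type*} [Field K] [Fintype m] [Fintype n]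
    [Fintype ι] (M : Matrix m n K) (f : ι → n) (hli : LinearIndependent K (M.col ∘ f))
    (hrank : M.rank ≤ Fintype.card ι) (j : n) :
    M.col j ∈ Submodule.span K (Set.range (M.col ∘ f)) := by
  have hle : Submodule.span K (Set.range (M.col ∘ f)) ≤ Submodule.span K (Set.range M.col) :=
    Submodule.span_mono (Set.range_comp_subset_range f M.col)
  have heq := Submodule.eq_of_le_of_finrank_le hle (by
    rw [← M.rank_eq_finrank_span_cols, finrank_span_eq_card hli]; exact hrank)
  exact heq ▸ Submodule.subset_span (Set.mem_range_self j)

lemma Matrix.IsHermitian.exists_eigenvalues_eq_neg {𝕜 n : Type*} [RCLike 𝕜] [Fintype n]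
    [DecidableEq n] {A : Matrix n n 𝕜} (hA : A.IsHermitian) (S : (Matrix n n 𝕜)ˣ)
    (hS : (S : Matrix n n 𝕜) * A * ((S⁻¹ : (Matrix n n 𝕜)ˣ) : Matrix n n 𝕜) = -A) (i : n) :
    ∃ j, hA.eigenvalues j = -hA.eigenvalues i := by
  have hsymm : spectrum ℝ A = -spectrum ℝ A := by
    rw [spectrum.neg_eq, ← hS, spectrum.units_conjugate]
  have hi := hA.eigenvalues_mem_spectrum_real i
  rw [hsymm, Set.mem_neg, hA.spectrum_real_eq_range_eigenvalues] at hi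
  exact hi

lemma SimpleGraph.rank_adjMatrix_completeBipartiteGraph_le_two {K α β : Type*} [Field K]
    [Fintype α] [Fintype β] :
    ((completeBipartiteGraph α β).adjMatrix K).rank ≤ 2 := by
  set M := (completeBipartiteGraph α β).adjMatrix K
  let side : Bool → α ⊕ β → K := fun b x => if x.isLeft = b then 1 else 0
  have hcols : Set.range M.col ⊆ Set.range side := by
    rintro _ ⟨x, rfl⟩
    refine ⟨!x.isLeft, ?_⟩
    ext y
    cases x <;> cases y <;> simp [M, side, Matrix.col]
  rw [M.rank_eq_finrank_span_cols]
  calc _ ≤ Module.finrank K (Submodule.span K (Set.range side)) :=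
        Submodule.finrank_mono (Submodule.span_mono hcols)
    _ ≤ Fintype.card Bool := finrank_range_le_card side
    _ = 2 := rfl

lemma SimpleGraph.exists_equiv_completeBipartiteGraph {V : Type*} [Fintype V]
    (G : SimpleGraph V) (c : V → Fin 2) (h : ∀ u v, G.Adj u v ↔ c u ≠ c v) :
    ∃ (p q : ℕ) (e : V ≃ Fin p ⊕ Fin q),
      ∀ i j, G.Adj i j ↔ (completeBipartiteGraph (Fin p) (Fin q)).Adj (e i) (e j) := by
  let e := (Equiv.sumCompl fun v => c v = 0).symm.trans
    (Equiv.sumCongr (Fintype.equivFin _) (Fintype.equivFin _))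
  have hleft : ∀ v, (e v).isLeft ↔ c v = 0 := by
    intro v
    by_cases hv : c v = 0 <;>
      simp [e, hv, Equiv.sumCompl_symm_apply_of_pos, Equiv.sumCompl_symm_apply_of_neg]
  refine ⟨_, _, e, fun i j => ?_⟩
  simp only [h, completeBipartiteGraph, ← Sum.not_isLeft, hleft]
  omega

namespace TGainGraph

variable {V : Type*} [Fintype V] [DecidableEq V] (Φ : TGainGraph V)

lemma A_self (i : V) : Φ.A i i = 0 :=
  Φ.zeroGain i i (Φ.G.loopless.irrefl i)

lemma A_ne_zero_of_adj {u v : V} (h : Φ.G.Adj u v) : Φ.A u v ≠ 0 :=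
  norm_ne_zero_iff.mp (by rw [Φ.unitGain u v h]; exact one_ne_zero)

lemma A_eq_zero_of_color_eq {α : Type*} (c : Φ.G.Coloring α) {u v : V} (h : c u = c v) :
    Φ.A u v = 0 :=
  Φ.zeroGain u v fun hadj => c.valid hadj h

lemma sum_eigenvalues_eq_zero : ∑ i, Φ.herm.eigenvalues i = 0 := by
  have htrace := Φ.herm.trace_eq_sum_eigenvalues
  simp only [Matrix.trace, Matrix.diag, Φ.A_self, Finset.sum_const_zero] at htrace
  simpa using (congrArg Complex.re htrace).symm

lemma abs_eigenvalues_le_specRadius (i : V) : |Φ.herm.eigenvalues i| ≤ Φ.specRadius :=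
  le_ciSup (f := fun i => |Φ.herm.eigenvalues i|) (Set.finite_range _).bddAbove i

lemma specRadius_nonneg : 0 ≤ Φ.specRadius :=
  Real.iSup_nonneg fun _ => abs_nonneg _

lemma exists_abs_eigenvalues_eq_specRadius [Nonempty V] :
    ∃ j, |Φ.herm.eigenvalues j| = Φ.specRadius := by
  obtain ⟨j, hj⟩ := Finite.exists_max fun i => |Φ.herm.eigenvalues i|
  exact ⟨j, le_antisymm (Φ.abs_eigenvalues_le_specRadius j) (ciSup_le hj)⟩

lemma two_mul_specRadius_le_energy [Nonempty V] : 2 * Φ.specRadius ≤ Φ.energy := by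
  obtain ⟨j, hj⟩ := Φ.exists_abs_eigenvalues_eq_specRadius
  rw [← hj]
  exact two_mul_abs_le_sum_abs_of_sum_eq_zero _ Φ.sum_eigenvalues_eq_zero j

lemma energy_le_rank_mul_specRadius : Φ.energy ≤ Φ.A.rank * Φ.specRadius := by
  set μ := Φ.herm.eigenvalues
  calc Φ.energy = ∑ i ∈ Finset.univ.filter (μ · ≠ 0), |μ i| := by
        rw [energy, ← Finset.sum_filter_ne_zero]
        simp only [ne_eq, abs_eq_zero, μ]
    _ ≤ (Finset.univ.filter (μ · ≠ 0)).card • Φ.specRadius :=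
        Finset.sum_le_card_nsmul _ _ _ fun i _ => Φ.abs_eigenvalues_le_specRadius i
    _ = Φ.A.rank * Φ.specRadius := by
        rw [Φ.herm.rank_eq_card_non_zero_eigs, Fintype.card_subtype, nsmul_eq_mul]

lemma exists_eigenvalues_eq_neg_of_colorable (hcol : Φ.G.Colorable 2) (i : V) :
    ∃ j, Φ.herm.eigenvalues j = -Φ.herm.eigenvalues i := by
  obtain ⟨c⟩ := hcol
  let sign : V → ℂ := fun v => if c v = 0 then 1 else -1
  have hsign : Matrix.diagonal sign * Matrix.diagonal sign = 1 := by
    rw [Matrix.diagonal_mul_diagonal, ← Matrix.diagonal_one]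
    congr 1; ext v; by_cases h : c v = 0 <;> simp [sign, h]
  refine Φ.herm.exists_eigenvalues_eq_neg ⟨_, _, hsign, hsign⟩ ?_ i
  ext u v
  simp only [Units.inv_mk, Matrix.diagonal_mul, Matrix.mul_diagonal, Matrix.neg_apply]
  by_cases hadj : Φ.G.Adj u v
  · have hne := c.valid hadj
    have : sign u * sign v = -1 := by
      obtain ⟨hu, hv⟩ | ⟨hu, hv⟩ : (c u = 0 ∧ c v = 1) ∨ (c u = 1 ∧ c v = 0) := by omega
      all_goals simp [sign, hu, hv]
    linear_combination Φ.A u v * this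
  · simp [Φ.zeroGain u v hadj]

lemma rank_le_two_of_energy_eq_two_mul_specRadius [Nonempty V] (hcol : Φ.G.Colorable 2)
    (heq : Φ.energy = 2 * Φ.specRadius) : Φ.A.rank ≤ 2 := by
  obtain ⟨j, hj⟩ := Φ.exists_abs_eigenvalues_eq_specRadius
  obtain ⟨i, hi⟩ := Φ.exists_eigenvalues_eq_neg_of_colorable hcol j
  rw [Φ.herm.rank_eq_card_non_zero_eigs]
  by_cases hμj : Φ.herm.eigenvalues j = 0
  · have hμ : ∀ k, Φ.herm.eigenvalues k = 0 := fun k => abs_nonpos_iff.mp <| by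
      simpa [← hj, hμj] using Φ.abs_eigenvalues_le_specRadius k
    simp [hμ]
  · have hij : i ≠ j := by rintro rfl; exact hμj (by linarith)
    refine card_ne_zero_le_two_of_sum_abs_le _ hij ?_
    rw [hi, abs_neg, hj, ← two_mul]
    exact heq.le

lemma energy_eq_two_mul_specRadius_iff_rank_le_two [Nonempty V] (hcol : Φ.G.Colorable 2) :
    Φ.energy = 2 * Φ.specRadius ↔ Φ.A.rank ≤ 2 := by
  refine ⟨Φ.rank_le_two_of_energy_eq_two_mul_specRadius hcol, fun hrank => ?_⟩
  refine le_antisymm (Φ.energy_le_rank_mul_specRadius.trans ?_) Φ.two_mul_specRadius_le_energy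
  exact mul_le_mul_of_nonneg_right (by exact_mod_cast hrank) Φ.specRadius_nonneg

lemma rank_le_two_of_switchEquivToCompleteBipartite {p q : ℕ}
    (h : Φ.SwitchEquivToCompleteBipartite p q) : Φ.A.rank ≤ 2 := by
  obtain ⟨⟨e, he⟩, U, -, -, hA⟩ := h
  have hB : Φ.G.adjMatrix ℂ =
      ((completeBipartiteGraph (Fin p) (Fin q)).adjMatrix ℂ).submatrix e e := by
    ext i j
    simp only [SimpleGraph.adjMatrix_apply, Matrix.submatrix_apply, he]
  calc Φ.A.rank = (U * (Φ.G.adjMatrix ℂ * Uᴴ)).rank := by rw [hA, Matrix.mul_assoc]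
    _ ≤ (Φ.G.adjMatrix ℂ * Uᴴ).rank := Matrix.rank_mul_le_right _ _
    _ ≤ (Φ.G.adjMatrix ℂ).rank := Matrix.rank_mul_le_left _ _
    _ = ((completeBipartiteGraph (Fin p) (Fin q)).adjMatrix ℂ).rank := by
        rw [hB, Matrix.rank_submatrix]
    _ ≤ 2 := SimpleGraph.rank_adjMatrix_completeBipartiteGraph_le_two

lemma col_eq_smul_of_rank_le_two (hrank : Φ.A.rank ≤ 2) {α : Type*} (c : Φ.G.Coloring α)
    {a b v : V} (hab : Φ.G.Adj a b) (hv : c v = c b) : ∃ t : ℂ, Φ.A.col v = t • Φ.A.col b := by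
  have hpair : Φ.A.col ∘ ![a, b] = ![Φ.A.col a, Φ.A.col b] := by
    ext i : 1; fin_cases i <;> rfl
  have hli : LinearIndependent ℂ (Φ.A.col ∘ ![a, b]) := by
    rw [hpair, LinearIndependent.pair_iff]
    intro s t hst
    have ha := congrFun hst a
    have hb := congrFun hst b
    simp only [Pi.add_apply, Pi.smul_apply, Matrix.col_apply, Φ.A_self, smul_eq_mul, mul_zero,
      zero_add, add_zero, Pi.zero_apply] at ha hb
    exact ⟨(mul_eq_zero.mp hb).resolve_right (Φ.A_ne_zero_of_adj hab.symm),
      (mul_eq_zero.mp ha).resolve_right (Φ.A_ne_zero_of_adj hab)⟩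
  have hmem := Φ.A.col_mem_span_of_rank_le ![a, b] hli (by simpa using hrank) v
  rw [hpair, Matrix.range_cons_cons_empty] at hmem
  obtain ⟨s, t, hst⟩ := Submodule.mem_span_pair.mp hmem
  have hs : s = 0 := by
    have hb := congrFun hst b
    simp only [Pi.add_apply, Pi.smul_apply, Matrix.col_apply, Φ.A_self, smul_eq_mul, mul_zero,
      add_zero, Φ.A_eq_zero_of_color_eq c hv.symm] at hb
    exact (mul_eq_zero.mp hb).resolve_right (Φ.A_ne_zero_of_adj hab.symm)
  exact ⟨t, by rw [← hst, hs, zero_smul, zero_add]⟩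

lemma adj_iff_color_ne_of_rank_le_two (hconn : Φ.G.Connected) (hrank : Φ.A.rank ≤ 2)
    (c : Φ.G.Coloring (Fin 2)) (u v : V) : Φ.G.Adj u v ↔ c u ≠ c v := by
  refine ⟨c.valid, fun hne => ?_⟩
  have : Nontrivial V := ⟨u, v, fun h => hne (h ▸ rfl)⟩
  have hnbr : ∀ x, ∃ y, Φ.G.Adj x y := fun x => by
    simpa [SimpleGraph.IsIsolated] using hconn.preconnected.not_isIsolated x
  obtain ⟨x, hvx⟩ := hnbr v
  obtain ⟨w, huw⟩ := hnbr u
  have hux : c u = c x := by have := c.valid hvx; omega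
  obtain ⟨t, ht⟩ := Φ.col_eq_smul_of_rank_le_two hrank c hvx hux
  have hu_col : ∀ i, Φ.A i u = t * Φ.A i x := fun i => congrFun ht i
  have ht0 : t ≠ 0 := by
    rintro rfl
    exact Φ.A_ne_zero_of_adj huw.symm (by simpa using hu_col w)
  by_contra hnadj
  exact mul_ne_zero ht0 (Φ.A_ne_zero_of_adj hvx)
    (by rw [← hu_col v, Φ.zeroGain v u fun h => hnadj h.symm])

lemma switchesToOne_of_forall_adj (g : V → ℂ) (hg : ∀ v, ‖g v‖ = 1)
    (h : ∀ u v, Φ.G.Adj u v → Φ.A u v = g u * star (g v)) : Φ.SwitchesToOne := by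
  refine ⟨Matrix.diagonal g, Matrix.isDiag_diagonal g, ?_, ?_⟩
  · rw [Matrix.mem_unitaryGroup_iff', Matrix.star_eq_conjTranspose,
      Matrix.diagonal_conjTranspose, Matrix.diagonal_mul_diagonal, ← Matrix.diagonal_one]
    congr 1
    ext v
    simp [Complex.conj_mul', hg]
  · ext u v
    rw [Matrix.diagonal_conjTranspose, Matrix.mul_diagonal, Matrix.diagonal_mul,
      SimpleGraph.adjMatrix_apply]
    by_cases hadj : Φ.G.Adj u v
    · simp [hadj, h u v hadj]
    · simp [hadj, Φ.zeroGain u v hadj]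

lemma switchesToOne_of_rank_le_two (hconn : Φ.G.Connected) (hrank : Φ.A.rank ≤ 2)
    (c : Φ.G.Coloring (Fin 2)) : Φ.SwitchesToOne := by
  by_cases hedge : ∃ a b, Φ.G.Adj a b
  swap
  · simp only [not_exists] at hedge
    exact Φ.switchesToOne_of_forall_adj 1 (by simp) fun u v h => absurd h (hedge u v)
  obtain ⟨a, b, hab⟩ := hedge
  have hadj := Φ.adj_iff_color_ne_of_rank_le_two hconn hrank c
  let g : V → ℂ := fun u => if c u = c a then Φ.A u b else star (Φ.A a u) * Φ.A a b
  have hg : ∀ u, ‖g u‖ = 1 := by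
    intro u
    by_cases hu : c u = c a
    · simp only [g, if_pos hu]
      exact Φ.unitGain _ _ ((hadj u b).mpr (hu ▸ c.valid hab))
    · simp only [g, if_neg hu, norm_mul, norm_star, Φ.unitGain _ _ hab,
        Φ.unitGain _ _ ((hadj a u).mpr (Ne.symm hu)), mul_one]
  -- between the two colour classes `A` has rank one: `A u v * A a b = A u b * A a v`
  have hblock : ∀ u v, c u = c a → c v = c b → Φ.A u v = g u * star (g v) := by
    intro u v hu hv
    obtain ⟨t, ht⟩ := Φ.col_eq_smul_of_rank_le_two hrank c hab hv
    have hva : ¬ c v = c a := hv ▸ (c.valid hab).symm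
    have hunit : Φ.A a b * star (Φ.A a b) = 1 := by
      rw [Complex.star_def, Complex.mul_conj', Φ.unitGain _ _ hab]; simp
    simp only [g, if_pos hu, if_neg hva, star_mul', star_star]
    have hu_col : Φ.A u v = t * Φ.A u b := congrFun ht u
    have ha_col : Φ.A a v = t * Φ.A a b := congrFun ht a
    rw [hu_col, ha_col]
    linear_combination (-(t * Φ.A u b)) * hunit
  refine Φ.switchesToOne_of_forall_adj g hg fun u v huv => ?_
  have hcuv := c.valid huv
  have hcab := c.valid hab
  by_cases hu : c u = c a
  · exact hblock u v hu (by omega)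
  · rw [← Φ.herm.apply u v, hblock v u (by omega) (by omega), star_mul', star_star, mul_comm]

lemma exists_switchEquivToCompleteBipartite_of_rank_le_two (hconn : Φ.G.Connected)
    (hcol : Φ.G.Colorable 2) (hrank : Φ.A.rank ≤ 2) :
    ∃ p q : ℕ, Φ.SwitchEquivToCompleteBipartite p q := by
  obtain ⟨c⟩ := hcol
  obtain ⟨p, q, e, he⟩ :=
    Φ.G.exists_equiv_completeBipartiteGraph c (Φ.adj_iff_color_ne_of_rank_le_two hconn hrank c)
  exact ⟨p, q, ⟨e, he⟩, Φ.switchesToOne_of_rank_le_two hconn hrank c⟩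

end TGainGraph

open TGainGraph in
/-- `E(Φ) ≥ 2ρ(Φ)` for a connected gain graph; if moreover `G` is bipartite,
equality holds iff `Φ ∼ (K_{p,q},1)` for some `p, q`. -/
theorem two_specRadius_le_energy {V : Type*} [Fintype V] [DecidableEq V]
    (Φ : TGainGraph V) (hconn : Φ.G.Connected) :
    2 * Φ.specRadius ≤ Φ.energy ∧
    (Φ.G.Colorable 2 →
      (Φ.energy = 2 * Φ.specRadius ↔
        ∃ p q : ℕ, Φ.SwitchEquivToCompleteBipartite p q)) := by
  have : Nonempty V := hconn.nonempty
  refine ⟨Φ.two_mul_specRadius_le_energy, fun hcol => ?_⟩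
  rw [Φ.energy_eq_two_mul_specRadius_iff_rank_le_two hcol]
  exact ⟨Φ.exists_switchEquivToCompleteBipartite_of_rank_le_two hconn hcol,
    fun ⟨_, _, h⟩ => Φ.rank_le_two_of_switchEquivToCompleteBipartite h⟩
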